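/- arXiv:2502.15453 — 3 statements merged into one kernel-verified Lean document; each statement's English description precedes it below -/
import Mathlib

section
/- Let T be a finite transmission irregular tree and let v be a vertex of T. Then the connected components of the graph T − v (obtained by deleting v and its incident edges) have pairwise distinct numbers of vertices. -/
/-!
If `u` is a neighbour of `v` lying in the component `C` of `T - v`, then moving from `v` to `u`
brings the `|C|` vertices of `C` one step closer and pushes the other `n - |C|` vertices one step
away, so `Tr(u) + 2|C| = Tr(v) + n`. Every component of `T - v` contains a neighbour of `v`, so
two components of equal size yield neighbours of equal transmission; by transmission
irregularity these neighbours coincide, and so do the components.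
-/

namespace SimpleGraph

variable {V : Type*} {G : SimpleGraph V} {v : V}

theorem reachable_induce_compl_singleton_iff {a b : ({v}ᶜ : Set V)} :
    (G.induce {v}ᶜ).Reachable a b ↔ ∃ p : G.Walk a b, v ∉ p.support := by
  constructor
  · rintro ⟨q⟩
    -- stated separately: `q.map _` ends at `a` and `b` only up to unfolding, which defeats `rw`
    have hs := Walk.support_map (Embedding.induce ({v}ᶜ : Set V)).toHom q
    refine ⟨q.map (Embedding.induce _).toHom, fun hv => ?_⟩
    obtain ⟨x, -, hx⟩ := List.mem_map.mp (hs ▸ hv)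
    exact x.2 hx
  · rintro ⟨p, hp⟩
    exact ⟨p.induce {v}ᶜ fun x hx hxv => hp (hxv ▸ hx)⟩

theorem IsAcyclic.length_eq_dist (hG : G.IsAcyclic) {u w : V} {p : G.Walk u w}
    (hp : p.IsPath) : p.length = G.dist u w := by
  obtain ⟨q, hq, hlen⟩ := p.reachable.exists_path_of_dist
  obtain rfl : p = q := congrArg Subtype.val ((hG.subsingleton_path u w).elim ⟨p, hp⟩ ⟨q, hq⟩)
  exact hlen

theorem IsAcyclic.dist_add_dist_of_mem_support (hG : G.IsAcyclic) {u w : V} {p : G.Walk u w}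
    (hp : p.IsPath) (hv : v ∈ p.support) : G.dist u v + G.dist v w = G.dist u w := by
  classical
  rw [← hG.length_eq_dist (hp.takeUntil hv), ← hG.length_eq_dist (hp.dropUntil hv),
    ← hG.length_eq_dist hp, ← Walk.length_append, Walk.take_spec]

theorem IsAcyclic.dist_eq_dist_add_one_of_reachable_induce_compl (hG : G.IsAcyclic)
    {u w : ({v}ᶜ : Set V)} (hadj : G.Adj v u) (h : (G.induce {v}ᶜ).Reachable u w) :
    G.dist v w = G.dist u w + 1 := by
  classical
  obtain ⟨q, hq⟩ := reachable_induce_compl_singleton_iff.mp h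
  have hpath : (Walk.cons hadj q.toPath.1).IsPath :=
    (Walk.cons_isPath_iff _ _).mpr ⟨q.toPath.2, fun hv => hq (q.support_toPath_subset_support hv)⟩
  have hsplit := hG.dist_add_dist_of_mem_support (v := (u : V)) hpath (by simp)
  rw [← hsplit, dist_eq_one_iff_adj.mpr hadj, add_comm]

theorem IsTree.dist_eq_dist_add_one_of_not_reachable_induce_compl (hG : G.IsTree)
    {u w : ({v}ᶜ : Set V)} (hadj : G.Adj v u) (h : ¬(G.induce {v}ᶜ).Reachable u w) :
    G.dist u w = G.dist v w + 1 := by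
  obtain ⟨p, hp, -⟩ := hG.connected.exists_path_of_dist u w
  have hv : v ∈ p.support := by
    by_contra hv
    exact h (reachable_induce_compl_singleton_iff.mpr ⟨p, hv⟩)
  rw [← hG.isAcyclic.dist_add_dist_of_mem_support hp hv, dist_comm,
    dist_eq_one_iff_adj.mpr hadj, add_comm]

theorem Connected.exists_adj_mem_supp_induce_compl (hG : G.Connected)
    (c : (G.induce {v}ᶜ).ConnectedComponent) :
    ∃ u : ({v}ᶜ : Set V), G.Adj v u ∧ u ∈ c.supp := by
  obtain ⟨⟨w, hw⟩, rfl⟩ := c.exists_rep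
  obtain ⟨p, hp, -⟩ := hG.exists_path_of_dist v w
  cases p with
  | nil => exact absurd rfl hw
  | @cons _ u _ hadj q =>
    have hu : u ≠ v := hadj.ne.symm
    refine ⟨⟨u, hu⟩, hadj, ConnectedComponent.sound ?_⟩
    exact reachable_induce_compl_singleton_iff.mpr ⟨q, ((Walk.cons_isPath_iff _ _).mp hp).2⟩

theorem IsTree.sum_dist_add_two_mul_ncard_supp [Fintype V] (hG : G.IsTree)
    {c : (G.induce {v}ᶜ).ConnectedComponent} {u : ({v}ᶜ : Set V)} (hadj : G.Adj v u)
    (hu : u ∈ c.supp) :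
    ∑ w, G.dist u w + 2 * c.supp.ncard = ∑ w, G.dist v w + Fintype.card V := by
  classical
  set S : Set V := Subtype.val '' c.supp
  have hdist : ∀ w, G.dist u w + (if w ∈ S then 2 else 0) = G.dist v w + 1 := by
    intro w
    by_cases hwv : w = v
    · subst hwv
      have hvS : w ∉ S := fun ⟨x, _, hx⟩ => x.2 hx
      rw [if_neg hvS, dist_comm, dist_eq_one_iff_adj.mpr hadj, dist_self]
    lift w to ({v}ᶜ : Set V) using hwv
    have hwS : (w : V) ∈ S ↔ (G.induce {v}ᶜ).Reachable u w := by
      rw [Subtype.val_injective.mem_set_image, ConnectedComponent.mem_supp_iff,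
        ← (ConnectedComponent.mem_supp_iff c u).mp hu, ConnectedComponent.eq, reachable_comm]
    by_cases hr : (G.induce {v}ᶜ).Reachable u w
    · rw [if_pos (hwS.mpr hr), hG.isAcyclic.dist_eq_dist_add_one_of_reachable_induce_compl hadj hr]
    · rw [if_neg (hwS.not.mpr hr), hG.dist_eq_dist_add_one_of_not_reachable_induce_compl hadj hr]
  have hS : S.ncard = c.supp.ncard := Set.ncard_image_of_injective _ Subtype.val_injective
  have hsum : ∑ w, (if w ∈ S then 2 else 0) = 2 * S.ncard := by
    rw [Finset.sum_ite, Finset.sum_const_zero, Finset.sum_const, smul_eq_mul, add_zero, mul_comm,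
      Set.ncard_eq_toFinset_card', Set.filter_mem_univ_eq_toFinset]
  have htotal := Finset.sum_congr rfl fun w (_ : w ∈ Finset.univ) => hdist w
  rw [Finset.sum_add_distrib, Finset.sum_add_distrib, hsum, hS] at htotal
  simpa using htotal

end SimpleGraph

/-- If `T` is a finite transmission irregular tree and `v` is a vertex of `T`,
then the connected components of `T - v` have pairwise distinct numbers of vertices. -/
theorem components_distinct_orders_of_TI {V : Type*} [Fintype V]
    (T : SimpleGraph V) (hT : T.IsTree)
    (hTI : ∀ x y : V, (∑ w, T.dist x w) = (∑ w, T.dist y w) → x = y)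
    (v : V)
    (c₁ c₂ : (T.induce ({v}ᶜ : Set V)).ConnectedComponent) (hne : c₁ ≠ c₂) :
    c₁.supp.ncard ≠ c₂.supp.ncard := by
  intro hcard
  obtain ⟨u₁, hadj₁, hu₁⟩ := hT.connected.exists_adj_mem_supp_induce_compl c₁
  obtain ⟨u₂, hadj₂, hu₂⟩ := hT.connected.exists_adj_mem_supp_induce_compl c₂
  have h₁ := hT.sum_dist_add_two_mul_ncard_supp hadj₁ hu₁
  have h₂ := hT.sum_dist_add_two_mul_ncard_supp hadj₂ hu₂
  obtain rfl : u₁ = u₂ := Subtype.ext (hTI _ _ (by omega))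
  exact hne (hu₁.symm.trans hu₂)
end

section
/- Let T be a finite transmission irregular tree of order n ≥ 2 and let v be a vertex of T whose transmission is minimum among all vertices of T. Then the degree of v in T is at least 3. -/
/-!
Moving from `v` to a neighbour `a` changes the transmission by `n - 2 |B_a|`, where `B_a` is the
branch of `T - v` at `a`. So at a vertex of minimum transmission of a transmission irregular tree
every branch has fewer than `n / 2` vertices. The branches partition the other `n - 1` vertices,
hence there are at least two of them, and if there are exactly two, both have `(n - 1) / 2`
vertices, which gives the two neighbours of `v` equal transmissions.
-/

open scoped Classical
open Finset

namespace SimpleGraph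

variable {V : Type*} {G : SimpleGraph V} {v a b x : V}

lemma Reachable.exists_adj_dist_add_one_eq (hr : G.Reachable v x) (hx : v ≠ x) :
    ∃ a, G.Adj v a ∧ G.dist a x + 1 = G.dist v x := by
  obtain ⟨p, -, hp⟩ := hr.exists_path_of_dist
  cases p with
  | nil => exact absurd rfl hx
  | cons hadj q =>
    refine ⟨_, hadj, le_antisymm ?_ ?_⟩
    · simpa [← hp] using dist_le q
    · simpa [dist_eq_one_iff_adj.mpr hadj, add_comm] using hadj.reachable.dist_triangle_left x

lemma IsAcyclic.eq_snd_of_adj_of_dist_add_one_eq (hG : G.IsAcyclic) {p : G.Walk v x}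
    (hp : p.IsPath) (hadj : G.Adj v a) (h : G.dist a x + 1 = G.dist v x) : a = p.snd := by
  obtain ⟨q, hq, hql⟩ := (hadj.symm.reachable.trans p.reachable).exists_path_of_dist
  have hv : v ∉ q.support := fun hv => by
    have := dist_le (q.dropUntil v hv)
    have := q.length_dropUntil_le_length hv
    omega
  obtain rfl : p = .cons hadj q :=
    congrArg Subtype.val <| (hG.subsingleton_path v x).elim ⟨p, hp⟩ ⟨_, hq.cons hv⟩
  simp

lemma IsAcyclic.eq_of_adj_of_dist_add_one_eq (hG : G.IsAcyclic) (ha : G.Adj v a)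
    (hb : G.Adj v b) (hax : G.dist a x + 1 = G.dist v x) (hbx : G.dist b x + 1 = G.dist v x) :
    a = b := by
  obtain ⟨p, hp, -⟩ :=
    (Reachable.of_dist_ne_zero (by omega : G.dist v x ≠ 0)).exists_path_of_dist
  rw [hG.eq_snd_of_adj_of_dist_add_one_eq hp ha hax, hG.eq_snd_of_adj_of_dist_add_one_eq hp hb hbx]

variable [Fintype V]

noncomputable def transmission (G : SimpleGraph V) (v : V) : ℕ := ∑ w, G.dist v w

/-- For a neighbour `a` of `v` in a tree, the vertex set of the component of `G - v` containing
`a`. -/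
noncomputable def branch (G : SimpleGraph V) (v a : V) : Finset V :=
  {x | G.dist a x + 1 = G.dist v x}

lemma IsTree.transmission_add_two_mul_card_branch (hG : G.IsTree) (hadj : G.Adj v a) :
    G.transmission a + 2 * #(G.branch v a) = G.transmission v + Fintype.card V := by
  have hterm : ∀ x, G.dist a x + (if x ∈ G.branch v a then 2 else 0) = G.dist v x + 1 := by
    intro x
    have := hG.dist_eq_dist_add_one_of_adj x hadj
    rw [dist_comm (u := x), dist_comm (u := x)] at this
    simp only [branch, mem_filter, mem_univ, true_and]
    split_ifs <;> omega
  have hsum := sum_congr rfl fun x (_ : x ∈ univ) => hterm x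
  rw [sum_add_distrib, sum_add_distrib, sum_ite_mem, univ_inter, sum_const, sum_const, card_univ,
    smul_eq_mul, smul_eq_mul, mul_one] at hsum
  rw [transmission, transmission, ← hsum, mul_comm]

lemma IsTree.sum_card_branch_add_one (hG : G.IsTree) (v : V) :
    ∑ a ∈ G.neighborFinset v, #(G.branch v a) + 1 = Fintype.card V := by
  have hdisj : (G.neighborFinset v : Set V).PairwiseDisjoint (G.branch v) := by
    intro a ha b hb hab
    refine Finset.disjoint_left.2 fun x hxa hxb => hab ?_
    simp only [branch, mem_filter, mem_univ, true_and, coe_neighborFinset, mem_neighborSet] at ha hb hxa hxb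
    exact hG.isAcyclic.eq_of_adj_of_dist_add_one_eq ha hb hxa hxb
  have hcover : (G.neighborFinset v).biUnion (G.branch v) = univ.erase v := by
    ext x
    simp only [branch, mem_biUnion, mem_neighborFinset, mem_filter, mem_univ, true_and,
      mem_erase, and_true]
    constructor
    · rintro ⟨a, -, h⟩ rfl
      simp at h
    · exact fun hx => (hG.connected v x).exists_adj_dist_add_one_eq (Ne.symm hx)
  rw [← card_biUnion hdisj, hcover, card_erase_add_one (mem_univ v), card_univ]

lemma IsTree.two_mul_card_branch_lt_iff (hG : G.IsTree) (hadj : G.Adj v a) :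
    2 * #(G.branch v a) < Fintype.card V ↔ G.transmission v < G.transmission a := by
  have := hG.transmission_add_two_mul_card_branch hadj
  omega

lemma IsTree.two_le_degree_of_two_mul_card_branch_lt (hG : G.IsTree) (hn : 2 ≤ Fintype.card V)
    (h : ∀ a, G.Adj v a → 2 * #(G.branch v a) < Fintype.card V) : 2 ≤ G.degree v := by
  have hsum := hG.sum_card_branch_add_one v
  have hle : ∑ a ∈ G.neighborFinset v, (2 * #(G.branch v a) + 1)
      ≤ ∑ _a ∈ G.neighborFinset v, Fintype.card V :=
    sum_le_sum fun a ha => h a ((mem_neighborFinset G v a).1 ha)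
  rw [sum_add_distrib, ← mul_sum, sum_const, sum_const, card_neighborFinset_eq_degree,
    smul_eq_mul, smul_eq_mul, mul_one] at hle
  by_contra! hdeg
  interval_cases G.degree v <;> omega

lemma IsTree.exists_ne_transmission_eq_of_degree_eq_two (hG : G.IsTree) (hdeg : G.degree v = 2)
    (h : ∀ a, G.Adj v a → 2 * #(G.branch v a) < Fintype.card V) :
    ∃ a b, a ≠ b ∧ G.transmission a = G.transmission b := by
  obtain ⟨a, b, hab, hN⟩ := card_eq_two.1 (G.card_neighborFinset_eq_degree v ▸ hdeg)
  have ha : G.Adj v a := (mem_neighborFinset G v a).1 (by simp [hN])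
  have hb : G.Adj v b := (mem_neighborFinset G v b).1 (by simp [hN])
  have hsum := hG.sum_card_branch_add_one v
  rw [hN, sum_pair hab] at hsum
  have := h a ha
  have := h b hb
  have := hG.transmission_add_two_mul_card_branch ha
  have := hG.transmission_add_two_mul_card_branch hb
  exact ⟨a, b, hab, by omega⟩

end SimpleGraph

/-- If `T` is a finite transmission irregular tree of order `n ≥ 2` and
`v` is a vertex of minimum transmission, then the degree of `v` in `T` is at least `3`. -/
theorem three_le_degree_of_min_transmission {V : Type*} [Fintype V]
    (T : SimpleGraph V) (hT : T.IsTree) (hn : 2 ≤ Fintype.card V)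
    (hTI : ∀ x y : V, (∑ w, T.dist x w) = (∑ w, T.dist y w) → x = y)
    (v : V) (hv : ∀ x : V, (∑ w, T.dist v w) ≤ ∑ w, T.dist x w) :
    3 ≤ T.degree v := by
  have hsmall : ∀ a, T.Adj v a → 2 * #(T.branch v a) < Fintype.card V := fun a ha =>
    (hT.two_mul_card_branch_lt_iff ha).2 <| (hv a).lt_of_ne fun h => ha.ne (hTI v a h)
  refine (hT.two_le_degree_of_two_mul_card_branch_lt hn hsmall).lt_of_ne fun hdeg => ?_
  obtain ⟨a, b, hab, h⟩ := hT.exists_ne_transmission_eq_of_degree_eq_two hdeg.symm hsmall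
  exact hab (hTI a b h)
end

section
/- Let T be a finite transmission irregular tree regarded as a rooted tree (with any choice of root r), let v be a vertex of T and T_v the subtree of T rooted at v. Then T_v is weakly transmission irregular: any two distinct vertices u₁, u₂ of T_v with d_{T_v}(v, u₁) = d_{T_v}(v, u₂) satisfy Tr_{T_v}(u₁) ≠ Tr_{T_v}(u₂). -/
open scoped Classical

/-- In a rooted tree `T` with root `r`, the subtree rooted at `v` consists of `v` together
with all vertices `w` such that `v` lies on the unique path from `r` to `w`. -/
def SimpleGraph.subtreeSet {V : Type*} (T : SimpleGraph V) (r v : V) : Set V :=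
  {w | ∀ p : T.Path r w, v ∈ p.1.support}

theorem SimpleGraph.mem_subtreeSet_self {V : Type*} (T : SimpleGraph V) (r v : V) :
    v ∈ T.subtreeSet r v := fun p => p.1.end_mem_support

/-- The transmission of a vertex `u` of the subtree of `T` rooted at `v` (with respect to
root `r`), computed within the subtree, i.e. within the induced subgraph on the subtree. -/
noncomputable def SimpleGraph.subtreeTr {V : Type*} [Fintype V] (T : SimpleGraph V)
    (r v u : V) (hu : u ∈ T.subtreeSet r v) : ℕ :=
  ∑ w : T.subtreeSet r v, (T.induce (T.subtreeSet r v)).dist ⟨u, hu⟩ w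

/-! Every vertex outside `T_v` is reached from `T_v` only through `v`. Hence shortest paths
between vertices of `T_v` stay in `T_v`, so `T_v` measures distances as `T` does, and for
`u ∈ T_v` the transmission splits as
`Tr_T(u) = Tr_{T_v}(u) + |V ∖ T_v| · d(u, v) + ∑_{w ∉ T_v} d(v, w)`.
The last two terms depend on `u` only through `d(u, v)`, so two vertices of `T_v` at the same
distance from `v` with equal transmission in `T_v` have equal transmission in `T`, and are
equal because `T` is transmission irregular. -/

namespace SimpleGraph

variable {V : Type*}

theorem Reachable.dist_map_le {W : Type*} {G : SimpleGraph V} {G' : SimpleGraph W}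
    (f : G →g G') {u v : V} (hr : G.Reachable u v) : G'.dist (f u) (f v) ≤ G.dist u v := by
  obtain ⟨p, hp⟩ := hr.exists_walk_length_eq_dist
  rw [← hp, ← Walk.length_map f]
  exact dist_le _

variable {T : SimpleGraph V} {r v u w : V}

theorem Walk.mem_support_of_mem_subtreeSet_of_notMem (hu : u ∈ T.subtreeSet r v)
    (hw : w ∉ T.subtreeSet r v) (p : T.Walk u w) : v ∈ p.support := by
  obtain ⟨q, hq⟩ := not_forall.mp hw
  by_contra hvp
  have hv : v ∉ (q.1.append p.reverse).support := by
    simp [Walk.mem_support_append_iff, hq, hvp]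
  exact hv (Walk.support_toPath_subset_support _ (hu (q.1.append p.reverse).toPath))

theorem Walk.IsPath.support_subset_subtreeSet_of_end {p : T.Walk u v} (hp : p.IsPath)
    (hu : u ∈ T.subtreeSet r v) : ∀ x ∈ p.support, x ∈ T.subtreeSet r v := by
  intro x hx
  by_contra hxS
  have hvx : v ≠ x := fun h => hxS (h ▸ T.mem_subtreeSet_self r v)
  exact Walk.endpoint_notMem_support_takeUntil hp hx hvx
    ((p.takeUntil x hx).mem_support_of_mem_subtreeSet_of_notMem hu hxS)

theorem Walk.IsPath.support_subset_subtreeSet {p : T.Walk u w} (hp : p.IsPath)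
    (hu : u ∈ T.subtreeSet r v) (hw : w ∈ T.subtreeSet r v) :
    ∀ x ∈ p.support, x ∈ T.subtreeSet r v := by
  intro x hx
  by_contra hxS
  have hv : v ∈ p.support := p.support_takeUntil_subset_support hx
    ((p.takeUntil x hx).mem_support_of_mem_subtreeSet_of_notMem hu hxS)
  have hx' : x ∈ (p.takeUntil v hv).support ∨ x ∈ (p.dropUntil v hv).reverse.support := by
    rw [Walk.support_reverse, List.mem_reverse, ← Walk.mem_support_append_iff,
      Walk.take_spec]
    exact hx
  rcases hx' with hx' | hx'
  · exact hxS ((hp.takeUntil hv).support_subset_subtreeSet_of_end hu x hx')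
  · exact hxS ((hp.dropUntil hv).reverse.support_subset_subtreeSet_of_end hw x hx')

theorem Connected.dist_eq_dist_add_dist_of_notMem_subtreeSet (hT : T.Connected)
    (hu : u ∈ T.subtreeSet r v) (hw : w ∉ T.subtreeSet r v) :
    T.dist u w = T.dist u v + T.dist v w := by
  refine le_antisymm hT.dist_triangle ?_
  obtain ⟨p, hp⟩ := hT.exists_walk_length_eq_dist u w
  have hv := p.mem_support_of_mem_subtreeSet_of_notMem hu hw
  calc T.dist u v + T.dist v w
      ≤ (p.takeUntil v hv).length + (p.dropUntil v hv).length :=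
        Nat.add_le_add (dist_le _) (dist_le _)
    _ = T.dist u w := by rw [← Walk.length_append, Walk.take_spec, hp]

theorem Connected.dist_induce_subtreeSet (hT : T.Connected) (hu : u ∈ T.subtreeSet r v)
    (hw : w ∈ T.subtreeSet r v) :
    (T.induce (T.subtreeSet r v)).dist ⟨u, hu⟩ ⟨w, hw⟩ = T.dist u w := by
  obtain ⟨p, hp, hlen⟩ := hT.exists_path_of_dist u w
  let q := p.induce _ (hp.support_subset_subtreeSet hu hw)
  refine le_antisymm ?_ (Reachable.dist_map_le (Embedding.induce _).toHom ⟨q⟩)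
  calc (T.induce (T.subtreeSet r v)).dist ⟨u, hu⟩ ⟨w, hw⟩ ≤ q.length := dist_le q
    _ = p.length := by
      rw [← Walk.length_map (Embedding.induce _).toHom]
      exact congrArg Walk.length (p.map_induce _)
    _ = T.dist u w := hlen

theorem Connected.subtreeTr_eq_sum_dist [Fintype V] (hT : T.Connected)
    (hu : u ∈ T.subtreeSet r v) :
    T.subtreeTr r v u hu = ∑ w ∈ (T.subtreeSet r v).toFinset, T.dist u w := by
  rw [subtreeTr, ← Finset.sum_set_coe]
  exact Finset.sum_congr rfl fun w _ => hT.dist_induce_subtreeSet hu w.2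

theorem Connected.sum_dist_eq_subtreeTr_add [Fintype V] (hT : T.Connected)
    (hu : u ∈ T.subtreeSet r v) :
    ∑ w, T.dist u w = T.subtreeTr r v u hu
      + ((T.subtreeSet r v).toFinsetᶜ.card * T.dist u v
        + ∑ w ∈ (T.subtreeSet r v).toFinsetᶜ, T.dist v w) := by
  rw [hT.subtreeTr_eq_sum_dist hu, ← Finset.sum_add_sum_compl (T.subtreeSet r v).toFinset,
    ← smul_eq_mul, ← Finset.sum_const, ← Finset.sum_add_distrib]
  congr 1
  refine Finset.sum_congr rfl fun w hw => ?_
  rw [Finset.mem_compl, Set.mem_toFinset] at hw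
  exact hT.dist_eq_dist_add_dist_of_notMem_subtreeSet hu hw

end SimpleGraph

/-- Let `T` be a finite transmission irregular tree rooted at any `r`,
`v` a vertex of `T` and `T_v` the subtree rooted at `v`.  Then `T_v` is weakly
transmission irregular: any two distinct vertices `u₁, u₂` of `T_v` with
`d_{T_v}(v, u₁) = d_{T_v}(v, u₂)` satisfy `Tr_{T_v}(u₁) ≠ Tr_{T_v}(u₂)`. -/
theorem subtree_WTI_of_TI {V : Type*} [Fintype V]
    (T : SimpleGraph V) (hT : T.IsTree)
    (hTI : ∀ x y : V, (∑ w, T.dist x w) = (∑ w, T.dist y w) → x = y)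
    (r v : V) (u₁ u₂ : V)
    (h₁ : u₁ ∈ T.subtreeSet r v) (h₂ : u₂ ∈ T.subtreeSet r v) (hne : u₁ ≠ u₂)
    (hd : (T.induce (T.subtreeSet r v)).dist ⟨v, T.mem_subtreeSet_self r v⟩ ⟨u₁, h₁⟩ =
          (T.induce (T.subtreeSet r v)).dist ⟨v, T.mem_subtreeSet_self r v⟩ ⟨u₂, h₂⟩) :
    T.subtreeTr r v u₁ h₁ ≠ T.subtreeTr r v u₂ h₂ := by
  intro hTr
  have hT := hT.connected
  have hdist : T.dist u₁ v = T.dist u₂ v := by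
    rwa [hT.dist_induce_subtreeSet, hT.dist_induce_subtreeSet, SimpleGraph.dist_comm,
      SimpleGraph.dist_comm (u := v)] at hd
  refine hne (hTI u₁ u₂ ?_)
  rw [hT.sum_dist_eq_subtreeTr_add h₁, hT.sum_dist_eq_subtreeTr_add h₂, hTr, hdist]
end
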